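/- The function x ↦ log x on (0,∞) is summable, and (Σ log)(x) = log Γ(x+1) for all x > -1. -/

import Mathlib

open Filter Topology

/-- `f` is asymptotically flat on `(0,∞)`: `f(n+x) - f(n) → 0` for every `x > 0`. -/
def AsympFlat (f : ℝ → ℂ) : Prop :=
  ∀ x : ℝ, 0 < x → Tendsto (fun n : ℕ => f (n + x) - f n) atTop (𝓝 0)

/-- The approximating sequence `n ↦ x f(n) + ∑_{ν=1}^n (f(ν) - f(ν+x))`. -/
noncomputable def sumSeq (f : ℝ → ℂ) (x : ℝ) (n : ℕ) : ℂ :=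
  x * f n + ∑ ν ∈ Finset.Icc 1 n, (f ν - f (ν + x))

/-- `f` is summable: the limit of `sumSeq f x` exists for every `x > -1`. -/
def IsSummable (f : ℝ → ℂ) : Prop :=
  ∀ x : ℝ, -1 < x → ∃ L : ℂ, Tendsto (sumSeq f x) atTop (𝓝 L)

/-- The summation operator `Σ`: `(Σf)(x) = lim_{n→∞} sumSeq f x n`. -/
noncomputable def Sig (f : ℝ → ℂ) (x : ℝ) : ℂ := limUnder atTop (sumSeq f x)

/-!
Up to the error term `log (n + x + 1) - log n → 0`, the sum `sumSeq log x n` is the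
Bohr–Mollerup sequence `logGammaSeq (x + 1) n = log (n ^ (x + 1) n! / ∏_{m=0}^n (x + 1 + m))`,
which converges to `log Γ(x + 1)` by Gauss's product formula.
-/

open Real Finset

lemma sumSeq_ofReal (f : ℝ → ℝ) (x : ℝ) (n : ℕ) :
    sumSeq (fun t => (f t : ℂ)) x n = ((x * f n + ∑ ν ∈ Icc 1 n, (f ν - f (ν + x)) : ℝ) : ℂ) := by
  push_cast [sumSeq]
  rfl

lemma sum_Icc_one_eq_sum_range {M : Type*} [AddCommMonoid M] (g : ℕ → M) (n : ℕ) :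
    ∑ ν ∈ Icc 1 n, g ν = ∑ m ∈ range n, g (m + 1) := by
  rw [range_eq_Ico, sum_Ico_add' g 0 n 1]
  rfl

lemma log_factorial (n : ℕ) : log (n.factorial : ℝ) = ∑ ν ∈ Icc 1 n, log ν := by
  rw [sum_Icc_one_eq_sum_range (fun ν => log ν), ← Finset.prod_range_add_one_eq_factorial,
    Nat.cast_prod, log_prod (fun m _ => by positivity)]

lemma real_sumSeq_log_eq_logGammaSeq_add (x : ℝ) (n : ℕ) :
    x * log n + ∑ ν ∈ Icc 1 n, (log ν - log (ν + x)) =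
      BohrMollerup.logGammaSeq (x + 1) n + (log (n + (x + 1)) - log n) := by
  rw [BohrMollerup.logGammaSeq, log_factorial, sum_range_succ, sum_sub_distrib,
    sum_Icc_one_eq_sum_range (fun ν => log (ν + x))]
  push_cast
  ring_nf

lemma tendsto_real_sumSeq_log {x : ℝ} (hx : -1 < x) :
    Tendsto (fun n : ℕ => x * log n + ∑ ν ∈ Icc 1 n, (log ν - log (ν + x))) atTop
      (𝓝 (log (Gamma (x + 1)))) := by
  have hlogGamma := BohrMollerup.tendsto_log_gamma (x := x + 1) (by linarith)
  have hflat := (tendsto_log_comp_add_sub_log (x + 1)).comp tendsto_natCast_atTop_atTop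
  simpa only [real_sumSeq_log_eq_logGammaSeq_add, add_zero, Function.comp_def] using hlogGamma.add hflat

/-- The function `x ↦ log x` is summable, and `(Σ log)(x) = log Γ(x+1)` for all `x > -1`. -/
theorem Sig_log :
    IsSummable (fun x : ℝ => (Real.log x : ℂ)) ∧
    ∀ x : ℝ, -1 < x →
      Sig (fun x : ℝ => (Real.log x : ℂ)) x = (Real.log (Real.Gamma (x + 1)) : ℂ) := by
  have h : ∀ x : ℝ, -1 < x → Tendsto (sumSeq (fun x : ℝ => (Real.log x : ℂ)) x) atTop
      (𝓝 (Real.log (Real.Gamma (x + 1)) : ℂ)) := fun x hx =>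
    ((Complex.continuous_ofReal.tendsto _).comp (tendsto_real_sumSeq_log hx)).congr
      fun n => (sumSeq_ofReal log x n).symm
  exact ⟨fun x hx => ⟨_, h x hx⟩, fun x hx => (h x hx).limUnder_eq⟩
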